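/- arXiv:2211.05311 — 4 statements merged into one kernel-verified Lean document; each statement's English description precedes it below -/
import Mathlib

section
/- Weak simulation lemma: for every bounded measurable f : S×A → ℝ, the prediction error satisfies |E(f)| = |(f* − f)(s₀,π)| ≤ (1/(1−γ)) · ‖f − Tf‖_π. -/
open MeasureTheory ProbabilityTheory
open scoped ENNReal NNReal

noncomputable section

/-- Expected value of `f (s, ·)` under the policy kernel at state `s`: `f(s,π)`. -/
def polExp {S A : Type*} [MeasurableSpace S] [MeasurableSpace A]
    (pol : Kernel S A) (f : S × A → ℝ) (s : S) : ℝ :=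
  ∫ a, f (s, a) ∂(pol s)

/-- The Bellman evaluation operator `(Tf)(s,a) = r(s,a) + γ E_{s' ∼ P(·|s,a)} f(s',π)`. -/
def bellmanOp {S A : Type*} [MeasurableSpace S] [MeasurableSpace A]
    (γ : ℝ) (rew : S × A → ℝ) (P : Kernel (S × A) S) (pol : Kernel S A)
    (f : S × A → ℝ) : S × A → ℝ :=
  fun sa => rew sa + γ * ∫ s', polExp pol f s' ∂(P sa)

/-- Squared `L²(μ)` norm: `‖h‖_μ² = E_μ h²`. -/
def l2sq {X : Type*} [MeasurableSpace X] (μ : Measure X) (h : X → ℝ) : ℝ :=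
  ∫ x, (h x) ^ 2 ∂μ

/-- `L²(μ)` norm `‖h‖_μ`. -/
def l2 {X : Type*} [MeasurableSpace X] (μ : Measure X) (h : X → ℝ) : ℝ :=
  Real.sqrt (l2sq μ h)

/-- Distance in `L²(μ)` from `h` to the class `F`: `inf_{g ∈ F} ‖g − h‖_μ`. -/
def projDist {S A : Type*} [MeasurableSpace S] [MeasurableSpace A]
    (μ : Measure (S × A)) (F : Set ((S × A) → ℝ)) (h : (S × A) → ℝ) : ℝ :=
  sInf ((fun g => l2 μ (fun x => g x - h x)) '' F)

/-- Bellman error `‖f − Tf‖_μ`. -/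
def bellErr {S A : Type*} [MeasurableSpace S] [MeasurableSpace A]
    (γ : ℝ) (rew : S × A → ℝ) (P : Kernel (S × A) S) (pol : Kernel S A)
    (μ : Measure (S × A)) (f : (S × A) → ℝ) : ℝ :=
  l2 μ (fun x => f x - bellmanOp γ rew P pol f x)

/-- The localized class `F(r) = {f ∈ F : ‖f − Tf‖_μ ≤ r}`. -/
def Floc {S A : Type*} [MeasurableSpace S] [MeasurableSpace A]
    (γ : ℝ) (rew : S × A → ℝ) (P : Kernel (S × A) S) (pol : Kernel S A)
    (μ : Measure (S × A)) (F : Set ((S × A) → ℝ)) (r : ℝ) : Set ((S × A) → ℝ) :=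
  {f ∈ F | bellErr γ rew P pol μ f ≤ r}

/-- The incompleteness function `I(r) = sup_{f ∈ F(r)} inf_{g ∈ F} ‖g − Tf‖_μ`. -/
def Iloc {S A : Type*} [MeasurableSpace S] [MeasurableSpace A]
    (γ : ℝ) (rew : S × A → ℝ) (P : Kernel (S × A) S) (pol : Kernel S A)
    (μ : Measure (S × A)) (F : Set ((S × A) → ℝ)) (r : ℝ) : ℝ :=
  sSup ((fun f => projDist μ F (bellmanOp γ rew P pol f)) '' Floc γ rew P pol μ F r)

/-- The incompleteness factor
`β = sup_{f ∈ F, ‖f−Tf‖_μ > 0} inf_{g ∈ F} ‖g − Tf‖_μ / ‖f − Tf‖_μ`. -/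
def betaFac {S A : Type*} [MeasurableSpace S] [MeasurableSpace A]
    (γ : ℝ) (rew : S × A → ℝ) (P : Kernel (S × A) S) (pol : Kernel S A)
    (μ : Measure (S × A)) (F : Set ((S × A) → ℝ)) : ℝ :=
  sSup ((fun f => projDist μ F (bellmanOp γ rew P pol f) / bellErr γ rew P pol μ f) ''
    {f ∈ F | 0 < bellErr γ rew P pol μ f})

/-- The population minimax loss `M(f) = ‖f − Tf‖_μ² − inf_{g ∈ F} ‖g − Tf‖_μ²`. -/
def minimaxLoss {S A : Type*} [MeasurableSpace S] [MeasurableSpace A]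
    (γ : ℝ) (rew : S × A → ℝ) (P : Kernel (S × A) S) (pol : Kernel S A)
    (μ : Measure (S × A)) (F : Set ((S × A) → ℝ)) (f : (S × A) → ℝ) : ℝ :=
  l2sq μ (fun x => f x - bellmanOp γ rew P pol f x) -
    sInf ((fun g => l2sq μ (fun x => g x - bellmanOp γ rew P pol f x)) '' F)

/-- One step of the state-action chain: transition by `P` then act by `pol`. -/
def stepMeas {S A : Type*} [MeasurableSpace S] [MeasurableSpace A]
    (P : Kernel (S × A) S) (pol : Kernel S A) (sa : S × A) : Measure (S × A) :=
  (P sa).bind (fun s' => (pol s').map (fun a' => (s', a')))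

/-- The law `P_h` of `(S_h, A_h)` when following `pol` from the state `s0`. -/
def stepLaw {S A : Type*} [MeasurableSpace S] [MeasurableSpace A]
    (P : Kernel (S × A) S) (pol : Kernel S A) (s0 : S) : ℕ → Measure (S × A)
  | 0 => (pol s0).map (fun a => (s0, a))
  | (h + 1) => (stepLaw P pol s0 h).bind (stepMeas P pol)

/-- The discounted occupancy measure `d^π = (1−γ) Σ_{h≥0} γ^h P_h`. -/
def occMeas {S A : Type*} [MeasurableSpace S] [MeasurableSpace A]
    (γ : ℝ) (P : Kernel (S × A) S) (pol : Kernel S A) (s0 : S) : Measure (S × A) :=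
  ENNReal.ofReal (1 - γ) •
    Measure.sum (fun h : ℕ => ENNReal.ofReal γ ^ h • stepLaw P pol s0 h)

/-- The prediction error `E(f) = (f* − f)(s₀, π)`. -/
def predErr {S A : Type*} [MeasurableSpace S] [MeasurableSpace A]
    (pol : Kernel S A) (fstar f : S × A → ℝ) (s0 : S) : ℝ :=
  polExp pol (fun x => fstar x - f x) s0

/-- The concentrability coefficient `C = sup_{f ∈ F} ‖f − Tf‖_π² / ‖f − Tf‖_μ²`. -/
def concCoef {S A : Type*} [MeasurableSpace S] [MeasurableSpace A]
    (γ : ℝ) (rew : S × A → ℝ) (P : Kernel (S × A) S) (pol : Kernel S A)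
    (μ dpi : Measure (S × A)) (F : Set ((S × A) → ℝ)) : ℝ :=
  sSup ((fun f => l2sq dpi (fun x => f x - bellmanOp γ rew P pol f x) /
      l2sq μ (fun x => f x - bellmanOp γ rew P pol f x)) '' F)

/-- The law of a data tuple `(s, a, R, s')` with `(s,a) ∼ μ`, `R ∼ RL(s,a)`,
`s' ∼ P(·|s,a)`. -/
def tupleLaw {S A : Type*} [MeasurableSpace S] [MeasurableSpace A]
    (μ : Measure (S × A)) (RL : Kernel (S × A) ℝ) (P : Kernel (S × A) S) :
    Measure ((S × A) × ℝ × S) :=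
  μ.bind (fun sa => ((RL sa).prod (P sa)).map (fun rs => (sa, rs)))

/-- The squared TD cost `C(g,f) = (g(s,a) − R − γ f(s',π))²` of a tuple. -/
def tdCost {S A : Type*} [MeasurableSpace S] [MeasurableSpace A]
    (γ : ℝ) (pol : Kernel S A) (g f : S × A → ℝ) (t : (S × A) × ℝ × S) : ℝ :=
  (g t.1 - t.2.1 - γ * polExp pol f t.2.2) ^ 2

/-- The empirical loss `L̂(g,f)`: the average of the squared TD cost over the dataset. -/
def empLoss {S A : Type*} [MeasurableSpace S] [MeasurableSpace A]
    (γ : ℝ) (pol : Kernel S A) {n : ℕ} (D : Fin n → (S × A) × ℝ × S)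
    (g f : S × A → ℝ) : ℝ :=
  (∑ i, tdCost γ pol g f (D i)) / n

/-- The empirical minimax objective `M̂(f) = L̂(f,f) − inf_{g ∈ F} L̂(g,f)`. -/
def empMinimax {S A : Type*} [MeasurableSpace S] [MeasurableSpace A]
    (γ : ℝ) (pol : Kernel S A) (F : Set ((S × A) → ℝ)) {n : ℕ}
    (D : Fin n → (S × A) × ℝ × S) (f : S × A → ℝ) : ℝ :=
  empLoss γ pol D f f - sInf ((fun g => empLoss γ pol D g f) '' F)

/-- `f̂` is an empirical minimizer of `M̂` over `F`. -/
def IsEmpMinimizer {S A : Type*} [MeasurableSpace S] [MeasurableSpace A]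
    (γ : ℝ) (pol : Kernel S A) (F : Set ((S × A) → ℝ)) {n : ℕ}
    (D : Fin n → (S × A) × ℝ × S) (fhat : S × A → ℝ) : Prop :=
  fhat ∈ F ∧ ∀ f ∈ F, empMinimax γ pol F D fhat ≤ empMinimax γ pol F D f

/-- The law of a single Rademacher sign: `±1` with probability `1/2` each. -/
def signMeas : Measure ℝ :=
  (2⁻¹ : ℝ≥0∞) • Measure.dirac (1 : ℝ) + (2⁻¹ : ℝ≥0∞) • Measure.dirac (-1 : ℝ)

/-- Rademacher complexity of a class `H` with `n` covariates drawn i.i.d. from `ξ`: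
`R_n[H] = E sup_{h ∈ H} |(1/n) Σ_i ε_i h(x_i)|`. -/
def radComp {X : Type*} [MeasurableSpace X] (ξ : Measure X) (n : ℕ)
    (H : Set (X → ℝ)) : ℝ :=
  ∫ p, sSup ((fun h => |(∑ i, p.2 i * h (p.1 i)) / n|) '' H)
    ∂((Measure.pi (fun _ : Fin n => ξ)).prod (Measure.pi (fun _ : Fin n => signMeas)))

/-- The `X`-process `X(f) = C(f,f) − C(g_f, f)` as a function of the data tuple. -/
def Xproc {S A : Type*} [MeasurableSpace S] [MeasurableSpace A]
    (γ : ℝ) (pol : Kernel S A) (gf : ((S × A) → ℝ) → (S × A) → ℝ)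
    (f : S × A → ℝ) : (S × A) × ℝ × S → ℝ :=
  fun t => tdCost γ pol f f t - tdCost γ pol (gf f) f t

/-- The `Y`-process `Y(g) = C(f*,f*) − C(g, f*)` as a function of the data tuple. -/
def Yproc {S A : Type*} [MeasurableSpace S] [MeasurableSpace A]
    (γ : ℝ) (pol : Kernel S A) (fstar g : S × A → ℝ) : (S × A) × ℝ × S → ℝ :=
  fun t => tdCost γ pol fstar fstar t - tdCost γ pol g fstar t

end

/-!
Write `g = f* − f`. Since `f* = T f*`, the Bellman residual is `f − T f = γ P^π g − g`, where
`P^π` is the one-step transition operator of the state–action chain. The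
occupancy measure satisfies the flow equation `E_{d^π}[g − γ P^π g] = (1 − γ) g(s₀, π)`, so
`(1 − γ) E(f) = −E_{d^π}[f − T f]`, and Cauchy–Schwarz on the probability measure `d^π` bounds
the right-hand side by `‖f − T f‖_π`.
-/

section BoundedMeasurable

variable {X : Type*} [MeasurableSpace X]

def IsBoundedMeasurable (φ : X → ℝ) : Prop :=
  Measurable φ ∧ ∃ C, ∀ x, |φ x| ≤ C

lemma IsBoundedMeasurable.sub {φ ψ : X → ℝ} (hφ : IsBoundedMeasurable φ)
    (hψ : IsBoundedMeasurable ψ) : IsBoundedMeasurable (φ - ψ) := by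
  obtain ⟨hφm, C, hC⟩ := hφ
  obtain ⟨hψm, D, hD⟩ := hψ
  exact ⟨hφm.sub hψm, C + D, fun x => (abs_sub _ _).trans (add_le_add (hC x) (hD x))⟩

lemma IsBoundedMeasurable.const_mul {φ : X → ℝ} (hφ : IsBoundedMeasurable φ) (c : ℝ) :
    IsBoundedMeasurable (fun x => c * φ x) := by
  obtain ⟨hm, C, hC⟩ := hφ
  exact ⟨hm.const_mul c, |c| * C, fun x => by
    rw [abs_mul]; exact mul_le_mul_of_nonneg_left (hC x) (abs_nonneg c)⟩

lemma IsBoundedMeasurable.memLp {φ : X → ℝ} (hφ : IsBoundedMeasurable φ) (p : ℝ≥0∞)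
    (μ : Measure X) [IsFiniteMeasure μ] : MemLp φ p μ := by
  obtain ⟨hm, C, hC⟩ := hφ
  exact MemLp.of_bound hm.aestronglyMeasurable C
    (ae_of_all _ fun x => (Real.norm_eq_abs _).trans_le (hC x))

lemma IsBoundedMeasurable.comp_prodMk {Y : Type*} [MeasurableSpace Y] {φ : X × Y → ℝ}
    (hφ : IsBoundedMeasurable φ) (x : X) : IsBoundedMeasurable (fun y => φ (x, y)) := by
  obtain ⟨hm, C, hC⟩ := hφ
  exact ⟨hm.comp measurable_prodMk_left, C, fun y => hC (x, y)⟩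

lemma IsBoundedMeasurable.integrable {φ : X → ℝ} (hφ : IsBoundedMeasurable φ)
    (μ : Measure X) [IsFiniteMeasure μ] : Integrable φ μ :=
  memLp_one_iff_integrable.1 (hφ.memLp 1 μ)

lemma abs_integral_le_of_forall_abs_le {φ : X → ℝ} {C : ℝ} (hC : ∀ x, |φ x| ≤ C)
    (μ : Measure X) [IsProbabilityMeasure μ] : |∫ x, φ x ∂μ| ≤ C := by
  simpa using norm_integral_le_of_norm_le_const (μ := μ)
    (ae_of_all _ fun x => (Real.norm_eq_abs _).trans_le (hC x))

end BoundedMeasurable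

lemma abs_integral_le_l2 {X : Type*} [MeasurableSpace X] (μ : Measure X)
    [IsProbabilityMeasure μ] {φ : X → ℝ} (hφ : MemLp φ 2 μ) : |∫ x, φ x ∂μ| ≤ l2 μ φ := by
  refine Real.abs_le_sqrt ?_
  have := variance_eq_sub hφ ▸ variance_nonneg φ μ
  exact sub_nonneg.1 this

lemma MeasureTheory.Measure.integral_comp {X Y : Type*} [MeasurableSpace X]
    [MeasurableSpace Y] (μ : Measure X) (κ : Kernel X Y) {φ : Y → ℝ} (hφ : Integrable φ (κ ∘ₘ μ)) :
    ∫ y, φ y ∂(κ ∘ₘ μ) = ∫ x, ∫ y, φ y ∂(κ x) ∂μ := by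
  rw [Measure.comp_eq_comp_const_apply] at hφ ⊢
  exact Kernel.integral_comp hφ

noncomputable section MarkovChain

variable {S A : Type*} [MeasurableSpace S] [MeasurableSpace A]

-- `nextExp P pol φ` is the paper's `P^π φ`, so that `T f = r + γ P^π f`.
def nextExp (P : Kernel (S × A) S) (pol : Kernel S A) (φ : S × A → ℝ) (sa : S × A) : ℝ :=
  ∫ s', polExp pol φ s' ∂(P sa)

def stepKernel (P : Kernel (S × A) S) (pol : Kernel S A) : Kernel (S × A) (S × A) :=
  (Kernel.id ×ₖ pol) ∘ₖ P

variable (P : Kernel (S × A) S) (pol : Kernel S A) [IsMarkovKernel pol]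

lemma IsBoundedMeasurable.polExp {φ : S × A → ℝ} (hφ : IsBoundedMeasurable φ) :
    IsBoundedMeasurable (polExp pol φ) := by
  obtain ⟨hm, C, hC⟩ := hφ
  exact ⟨(hm.stronglyMeasurable.integral_kernel_prod_right' (κ := pol)).measurable, C,
    fun s => abs_integral_le_of_forall_abs_le (fun a => hC (s, a)) (pol s)⟩

lemma polExp_sub {φ ψ : S × A → ℝ} (hφ : IsBoundedMeasurable φ) (hψ : IsBoundedMeasurable ψ)
    (s : S) : polExp pol (φ - ψ) s = polExp pol φ s - polExp pol ψ s :=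
  integral_sub (hφ.comp_prodMk s |>.integrable _) (hψ.comp_prodMk s |>.integrable _)

lemma id_prod_apply (s : S) : (Kernel.id ×ₖ pol) s = (pol s).map (fun a => (s, a)) := by
  rw [Kernel.prod_apply, Kernel.id_apply, Measure.dirac_prod]

lemma integral_id_prod_apply {φ : S × A → ℝ} (hφ : Measurable φ) (s : S) :
    ∫ x, φ x ∂((Kernel.id ×ₖ pol) s) = polExp pol φ s := by
  rw [id_prod_apply, integral_map (by fun_prop) hφ.aestronglyMeasurable]
  rfl

lemma stepMeas_eq_stepKernel : stepMeas P pol = ⇑(stepKernel P pol) := by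
  funext sa
  rw [stepMeas, stepKernel, Kernel.comp_apply]
  congr 1
  funext s
  exact (id_prod_apply pol s).symm

lemma stepLaw_succ (s0 : S) (h : ℕ) :
    stepLaw P pol s0 (h + 1) = stepKernel P pol ∘ₘ stepLaw P pol s0 h := by
  rw [stepLaw, stepMeas_eq_stepKernel]

lemma integral_stepLaw_zero {φ : S × A → ℝ} (hφ : Measurable φ) (s0 : S) :
    ∫ x, φ x ∂(stepLaw P pol s0 0) = polExp pol φ s0 := by
  rw [stepLaw, ← id_prod_apply, integral_id_prod_apply pol hφ]

variable [IsMarkovKernel P]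

lemma IsBoundedMeasurable.nextExp {φ : S × A → ℝ} (hφ : IsBoundedMeasurable φ) :
    IsBoundedMeasurable (nextExp P pol φ) := by
  obtain ⟨hm, C, hC⟩ := hφ.polExp pol
  exact ⟨((hm.comp measurable_snd).stronglyMeasurable.integral_kernel_prod_right'
    (κ := P)).measurable, C, fun sa => abs_integral_le_of_forall_abs_le hC (P sa)⟩

lemma nextExp_sub {φ ψ : S × A → ℝ} (hφ : IsBoundedMeasurable φ) (hψ : IsBoundedMeasurable ψ)
    (sa : S × A) : nextExp P pol (φ - ψ) sa = nextExp P pol φ sa - nextExp P pol ψ sa := by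
  rw [nextExp, funext (polExp_sub pol hφ hψ)]
  exact integral_sub ((hφ.polExp pol).integrable _) ((hψ.polExp pol).integrable _)

instance : IsMarkovKernel (stepKernel P pol) := by
  rw [stepKernel]
  infer_instance

instance (s0 : S) (h : ℕ) : IsProbabilityMeasure (stepLaw P pol s0 h) := by
  induction h with
  | zero => exact Measure.isProbabilityMeasure_map (by fun_prop)
  | succ h _ => rw [stepLaw_succ]; infer_instance

lemma integral_stepKernel {φ : S × A → ℝ} (hφ : IsBoundedMeasurable φ) (sa : S × A) :
    ∫ x, φ x ∂(stepKernel P pol sa) = nextExp P pol φ sa := by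
  rw [stepKernel, Kernel.integral_comp (hφ.integrable _)]
  exact integral_congr_ae (ae_of_all _ fun s => integral_id_prod_apply pol hφ.1 s)

lemma integral_stepLaw_succ {φ : S × A → ℝ} (hφ : IsBoundedMeasurable φ) (s0 : S) (h : ℕ) :
    ∫ x, φ x ∂(stepLaw P pol s0 (h + 1)) = ∫ x, nextExp P pol φ x ∂(stepLaw P pol s0 h) := by
  rw [stepLaw_succ, Measure.integral_comp _ _ (hφ.integrable _)]
  exact integral_congr_ae (ae_of_all _ (integral_stepKernel P pol hφ))

end MarkovChain

section Occupancy

variable {S A : Type*} [MeasurableSpace S] [MeasurableSpace A]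
  (P : Kernel (S × A) S) [IsMarkovKernel P] (pol : Kernel S A) [IsMarkovKernel pol]
  {γ : ℝ} (s0 : S)

lemma isProbabilityMeasure_occMeas (hγ0 : 0 ≤ γ) (hγ1 : γ < 1) :
    IsProbabilityMeasure (occMeas γ P pol s0) := by
  have hmass : (Measure.sum fun h : ℕ => ENNReal.ofReal γ ^ h • stepLaw P pol s0 h) Set.univ
      = (ENNReal.ofReal (1 - γ))⁻¹ := by
    simp [Measure.sum_apply _ MeasurableSet.univ, ENNReal.tsum_geometric,
      ENNReal.ofReal_sub _ hγ0]
  constructor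
  rw [occMeas, Measure.smul_apply, hmass, smul_eq_mul,
    ENNReal.mul_inv_cancel (by simpa using hγ1) ENNReal.ofReal_ne_top]

lemma integral_occMeas (hγ0 : 0 ≤ γ) (hγ1 : γ < 1) {φ : S × A → ℝ}
    (hφ : IsBoundedMeasurable φ) :
    ∫ x, φ x ∂(occMeas γ P pol s0)
      = (1 - γ) * ∑' h : ℕ, γ ^ h * ∫ x, φ x ∂(stepLaw P pol s0 h) := by
  have := isProbabilityMeasure_occMeas P pol s0 hγ0 hγ1
  have hφ_sum := hφ.integrable (occMeas γ P pol s0)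
  rw [occMeas, integrable_smul_measure (by simpa using hγ1) ENNReal.ofReal_ne_top] at hφ_sum
  rw [occMeas, integral_smul_measure, integral_sum_measure hφ_sum,
    ENNReal.toReal_ofReal (by linarith), smul_eq_mul]
  simp_rw [integral_smul_measure, ENNReal.toReal_pow, ENNReal.toReal_ofReal hγ0,
    smul_eq_mul]

lemma summable_pow_mul_integral_stepLaw (hγ0 : 0 ≤ γ) (hγ1 : γ < 1) {φ : S × A → ℝ}
    (hφ : IsBoundedMeasurable φ) :
    Summable fun h : ℕ => γ ^ h * ∫ x, φ x ∂(stepLaw P pol s0 h) := by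
  obtain ⟨-, C, hC⟩ := hφ
  refine Summable.of_norm_bounded ((summable_geometric_of_lt_one hγ0 hγ1).mul_right C)
    fun h => ?_
  rw [norm_mul, norm_pow, Real.norm_of_nonneg hγ0]
  exact mul_le_mul_of_nonneg_left (abs_integral_le_of_forall_abs_le hC _) (pow_nonneg hγ0 h)

-- The Bellman flow equation of `d^π`, obtained by shifting the series `Σ γ^h E_{P_h}` by one step.
lemma integral_occMeas_sub_nextExp (hγ0 : 0 ≤ γ) (hγ1 : γ < 1) {φ : S × A → ℝ}
    (hφ : IsBoundedMeasurable φ) :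
    ∫ x, (φ x - γ * nextExp P pol φ x) ∂(occMeas γ P pol s0) = (1 - γ) * polExp pol φ s0 := by
  have := isProbabilityMeasure_occMeas P pol s0 hγ0 hγ1
  have hshift := (summable_pow_mul_integral_stepLaw P pol s0 hγ0 hγ1 hφ).tsum_eq_zero_add
  simp_rw [pow_succ', mul_assoc, integral_stepLaw_succ P pol hφ, tsum_mul_left,
    pow_zero, one_mul, integral_stepLaw_zero P pol hφ.1] at hshift
  rw [integral_sub (hφ.integrable _) (((hφ.nextExp P pol).integrable _).const_mul γ),
    integral_const_mul, integral_occMeas P pol s0 hγ0 hγ1 hφ,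
    integral_occMeas P pol s0 hγ0 hγ1 (hφ.nextExp P pol), hshift]
  ring

end Occupancy

lemma sub_bellmanOp_eq_of_isFixedPt {S A : Type*} [MeasurableSpace S] [MeasurableSpace A]
    {γ : ℝ} {rew : S × A → ℝ} {P : Kernel (S × A) S} [IsMarkovKernel P]
    {pol : Kernel S A} [IsMarkovKernel pol] {fstar f : S × A → ℝ}
    (hfstar : IsBoundedMeasurable fstar) (hf : IsBoundedMeasurable f)
    (hfix : bellmanOp γ rew P pol fstar = fstar) :
    (fun x => f x - bellmanOp γ rew P pol f x)
      = fun x => γ * nextExp P pol (fstar - f) x - (fstar - f) x := by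
  funext x
  have hfix_x := congrFun hfix x
  rw [nextExp_sub P pol hfstar hf]
  simp only [bellmanOp, nextExp, Pi.sub_apply] at hfix_x ⊢
  linarith

theorem weak_simulation_lemma_general
    {S A : Type*} [MeasurableSpace S] [MeasurableSpace A]
    (γ : ℝ) (hγ0 : 0 ≤ γ) (hγ1 : γ < 1)
    (rew : S × A → ℝ)
    (P : Kernel (S × A) S) [IsMarkovKernel P]
    (pol : Kernel S A) [IsMarkovKernel pol]
    -- `f*` is the action-value function of the policy: a bounded measurable fixed
    -- point of the Bellman evaluation operator
    (fstar : (S × A) → ℝ) (hfstar_meas : Measurable fstar)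
    (hfstar_bdd : ∃ B : ℝ, ∀ x, |fstar x| ≤ B)
    (hfix : bellmanOp γ rew P pol fstar = fstar)
    -- the initial state
    (s0 : S)
    -- an arbitrary bounded measurable function
    (f : (S × A) → ℝ) (hf_meas : Measurable f) (hf_bdd : ∃ B : ℝ, ∀ x, |f x| ≤ B) :
    |predErr pol fstar f s0| ≤
      (1 / (1 - γ)) *
        l2 (occMeas γ P pol s0) (fun x => f x - bellmanOp γ rew P pol f x) := by
  have hfstar : IsBoundedMeasurable fstar := ⟨hfstar_meas, hfstar_bdd⟩
  have hf : IsBoundedMeasurable f := ⟨hf_meas, hf_bdd⟩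
  have hg := hfstar.sub hf
  have := isProbabilityMeasure_occMeas P pol s0 hγ0 hγ1
  have hflow : ∫ x, (γ * nextExp P pol (fstar - f) x - (fstar - f) x) ∂(occMeas γ P pol s0)
      = -((1 - γ) * predErr pol fstar f s0) := by
    change _ = -((1 - γ) * polExp pol (fstar - f) s0)
    rw [← integral_occMeas_sub_nextExp P pol s0 hγ0 hγ1 hg, ← integral_neg]
    simp only [neg_sub]
  have hpos : 0 < 1 - γ := by linarith
  rw [sub_bellmanOp_eq_of_isFixedPt hfstar hf hfix]
  calc |predErr pol fstar f s0|
      = 1 / (1 - γ) * |∫ x, (γ * nextExp P pol (fstar - f) x - (fstar - f) x)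
          ∂(occMeas γ P pol s0)| := by
        rw [hflow, abs_neg, abs_mul, abs_of_pos hpos]
        field_simp
    _ ≤ _ := by
        gcongr
        exact abs_integral_le_l2 _ ((((hg.nextExp P pol).const_mul γ).sub hg).memLp 2 _)

/-- Weak simulation lemma: for every bounded measurable `f`, the
prediction error satisfies `|E(f)| = |(f* − f)(s₀,π)| ≤ (1/(1−γ)) ‖f − Tf‖_π`. -/
theorem weak_simulation_lemma
    {S A : Type*} [MeasurableSpace S] [MeasurableSpace A]
    (γ : ℝ) (hγ0 : 0 ≤ γ) (hγ1 : γ < 1)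
    (rew : S × A → ℝ) (hrew_meas : Measurable rew)
    (hrew_bdd : ∀ x, rew x ∈ Set.Icc (0 : ℝ) 1)
    (P : Kernel (S × A) S) [IsMarkovKernel P]
    (pol : Kernel S A) [IsMarkovKernel pol]
    -- `f*` is the action-value function of the policy: a bounded measurable fixed
    -- point of the Bellman evaluation operator
    (fstar : (S × A) → ℝ) (hfstar_meas : Measurable fstar)
    (hfstar_bdd : ∃ B : ℝ, ∀ x, |fstar x| ≤ B)
    (hfix : bellmanOp γ rew P pol fstar = fstar)
    -- the initial state
    (s0 : S)
    -- an arbitrary bounded measurable function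
    (f : (S × A) → ℝ) (hf_meas : Measurable f) (hf_bdd : ∃ B : ℝ, ∀ x, |f x| ≤ B) :
    |predErr pol fstar f s0| ≤
      (1 / (1 - γ)) *
        l2 (occMeas γ P pol s0) (fun x => f x - bellmanOp γ rew P pol f x) :=
  weak_simulation_lemma_general γ hγ0 hγ1 rew P pol fstar hfstar_meas hfstar_bdd hfix s0 f hf_meas
    hf_bdd
end

section
/- Effect of β-incompleteness: for every f ∈ F, (1 − β) · ‖f − Tf‖_μ² ≤ M(f); in fact the stronger inequality (1 − β²) · ‖f − Tf‖_μ² ≤ M(f) holds. -/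
open MeasureTheory ProbabilityTheory
open scoped ENNReal NNReal

noncomputable section


section Aux

lemma l2sq_nonneg' {X : Type*} [MeasurableSpace X] (μ : MeasureTheory.Measure X)
    (h : X → ℝ) : 0 ≤ l2sq μ h :=
  MeasureTheory.integral_nonneg (fun x => sq_nonneg _)

lemma l2_nonneg' {X : Type*} [MeasurableSpace X] (μ : MeasureTheory.Measure X)
    (h : X → ℝ) : 0 ≤ l2 μ h := Real.sqrt_nonneg _

lemma l2_sq' {X : Type*} [MeasurableSpace X] (μ : MeasureTheory.Measure X)
    (h : X → ℝ) : (l2 μ h) ^ 2 = l2sq μ h :=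
  Real.sq_sqrt (l2sq_nonneg' μ h)

lemma sInf_sq_image_le {s : Set ℝ} (hne : s.Nonempty) (hnn : ∀ x ∈ s, 0 ≤ x) :
    sInf ((fun x => x ^ 2) '' s) ≤ (sInf s) ^ 2 := by
  have hbb : BddBelow s := ⟨0, fun x hx => hnn x hx⟩
  have hbb2 : BddBelow ((fun x => x ^ 2) '' s) := by
    refine ⟨0, ?_⟩
    rintro _ ⟨x, hx, rfl⟩
    positivity
  have hc : 0 ≤ sInf s := le_csInf hne hnn
  rw [Real.sInf_le_iff hbb2 (hne.image _)]
  intro ε hε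
  set c := sInf s with hcdef
  have hden : (0:ℝ) < 2 * c + 1 := by linarith
  set δ : ℝ := min 1 (ε / (2 * c + 1)) with hδ
  have hδpos : 0 < δ := lt_min one_pos (div_pos hε hden)
  obtain ⟨x, hx, hxlt⟩ := Real.lt_sInf_add_pos hne hδpos
  refine ⟨x ^ 2, ⟨x, hx, rfl⟩, ?_⟩
  have hx0 : 0 ≤ x := hnn x hx
  have h1 : x ^ 2 < (c + δ) ^ 2 := by
    exact pow_lt_pow_left₀ hxlt hx0 (by norm_num)
  have hδ1 : δ ≤ 1 := min_le_left _ _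
  have hδ2 : δ ≤ ε / (2 * c + 1) := min_le_right _ _
  have hδ3 : δ * (2 * c + 1) ≤ ε := by
    calc δ * (2 * c + 1) ≤ (ε / (2 * c + 1)) * (2 * c + 1) := by
          exact mul_le_mul_of_nonneg_right hδ2 (le_of_lt hden)
      _ = ε := div_mul_cancel₀ ε (ne_of_gt hden)
  nlinarith [sq_nonneg δ]

end Aux

/-- Effect of `β`-incompleteness: for every `f ∈ F`,
`(1 − β)·‖f − Tf‖_μ² ≤ M(f)`; in fact `(1 − β²)·‖f − Tf‖_μ² ≤ M(f)`. -/


theorem beta_incompleteness_lower_bounds_minimax_loss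
    {S A : Type*} [MeasurableSpace S] [MeasurableSpace A]
    (γ : ℝ) (hγ0 : 0 ≤ γ) (hγ1 : γ < 1)
    (rew : S × A → ℝ) (hrew_meas : Measurable rew)
    (hrew_bdd : ∀ x, rew x ∈ Set.Icc (0 : ℝ) 1)
    (P : Kernel (S × A) S) [IsMarkovKernel P]
    (pol : Kernel S A) [IsMarkovKernel pol]
    (μ : Measure (S × A)) [IsProbabilityMeasure μ]
    (F : Set ((S × A) → ℝ))
    (hF_meas : ∀ f ∈ F, Measurable f)
    (hF_bdd : ∀ f ∈ F, ∀ x, |f x| ≤ 1) :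
    ∀ f ∈ F,
      (1 - betaFac γ rew P pol μ F) *
          l2sq μ (fun x => f x - bellmanOp γ rew P pol f x) ≤
        minimaxLoss γ rew P pol μ F f ∧
      (1 - (betaFac γ rew P pol μ F) ^ 2) *
          l2sq μ (fun x => f x - bellmanOp γ rew P pol f x) ≤
        minimaxLoss γ rew P pol μ F f := by
  intro f hf
  classical
  set T : (S × A) → ℝ := bellmanOp γ rew P pol f with hT
  set E : ℝ := l2sq μ (fun x => f x - T x) with hE
  have hE0 : 0 ≤ E := l2sq_nonneg' μ _
  set Qset : Set ℝ := (fun g => l2sq μ (fun x => g x - T x)) '' F with hQ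
  set Sset : Set ℝ := (fun g => l2 μ (fun x => g x - T x)) '' F with hS
  have hQ_eq : Qset = (fun x => x ^ 2) '' Sset := by
    rw [hQ, hS, Set.image_image]
    apply Set.image_congr
    intro g _
    exact (l2_sq' μ _).symm
  have hSne : Sset.Nonempty := ⟨_, ⟨f, hf, rfl⟩⟩
  have hSnn : ∀ x ∈ Sset, 0 ≤ x := by
    rintro _ ⟨g, hg, rfl⟩; exact l2_nonneg' μ _
  have hQbb : BddBelow Qset := by
    refine ⟨0, ?_⟩
    rintro _ ⟨g, hg, rfl⟩
    exact l2sq_nonneg' μ _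
  have hQmem : E ∈ Qset := ⟨f, hf, rfl⟩
  have hInfE : sInf Qset ≤ E := csInf_le hQbb hQmem
  have hPD : projDist μ F T = sInf Sset := rfl
  set β : ℝ := betaFac γ rew P pol μ F with hβ
  -- key inequalities
  have key : sInf Qset ≤ β ^ 2 * E ∧ sInf Qset ≤ β * E := by
    rcases eq_or_lt_of_le hE0 with hEz | hEpos
    · constructor <;> · rw [← hEz] at hInfE ⊢; simpa using hInfE
    · -- bellErr f > 0
      have hbe : bellErr γ rew P pol μ f = Real.sqrt E := rfl
      have hsqrtpos : 0 < Real.sqrt E := Real.sqrt_pos.mpr hEpos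
      -- the ratio set
      set R : Set ℝ := ((fun f => projDist μ F (bellmanOp γ rew P pol f) /
          bellErr γ rew P pol μ f) '' {f ∈ F | 0 < bellErr γ rew P pol μ f}) with hR
      have hβdef : β = sSup R := rfl
      have hub : ∀ y ∈ R, y ≤ 1 := by
        rintro _ ⟨g, ⟨hgF, hgpos⟩, rfl⟩
        have hproj : projDist μ F (bellmanOp γ rew P pol g) ≤
            bellErr γ rew P pol μ g := by
          have hbb : BddBelow ((fun g' => l2 μ
              (fun x => g' x - bellmanOp γ rew P pol g x)) '' F) := by
            refine ⟨0, ?_⟩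
            rintro _ ⟨g', _, rfl⟩
            exact l2_nonneg' μ _
          exact csInf_le hbb ⟨g, hgF, rfl⟩
        rw [div_le_one hgpos]
        exact hproj
      have hRbdd : BddAbove R := ⟨1, hub⟩
      have hmem : projDist μ F T / Real.sqrt E ∈ R :=
        ⟨f, ⟨hf, by rw [hbe]; exact hsqrtpos⟩, rfl⟩
      have hratio : projDist μ F T / Real.sqrt E ≤ β := le_csSup hRbdd hmem
      have hPDnn : 0 ≤ projDist μ F T := le_csInf hSne hSnn
      have hβnn : 0 ≤ β :=
        le_trans (div_nonneg hPDnn hsqrtpos.le) hratio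
      have hβle1 : β ≤ 1 := csSup_le ⟨_, hmem⟩ hub
      have hPDle : projDist μ F T ≤ β * Real.sqrt E := by
        rw [div_le_iff₀ hsqrtpos] at hratio
        exact hratio
      have hsq : (projDist μ F T) ^ 2 ≤ (β * Real.sqrt E) ^ 2 :=
        pow_le_pow_left₀ hPDnn hPDle 2
      have hrw : (β * Real.sqrt E) ^ 2 = β ^ 2 * E := by
        rw [mul_pow, Real.sq_sqrt hE0]
      have hInfQ : sInf Qset ≤ β ^ 2 * E := by
        rw [hQ_eq]
        calc sInf ((fun x => x ^ 2) '' Sset) ≤ (sInf Sset) ^ 2 :=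
              sInf_sq_image_le hSne hSnn
          _ = (projDist μ F T) ^ 2 := by rw [hPD]
          _ ≤ (β * Real.sqrt E) ^ 2 := hsq
          _ = β ^ 2 * E := hrw
      refine ⟨hInfQ, le_trans hInfQ ?_⟩
      have : β ^ 2 ≤ β := by nlinarith
      exact mul_le_mul_of_nonneg_right this hE0
  have hML : minimaxLoss γ rew P pol μ F f = E - sInf Qset := rfl
  refine ⟨?_, ?_⟩
  · rw [hML]; linarith [key.2]
  · rw [hML]; linarith [key.1]


end
end

section
/- Bound on the off-policy cost coefficient: if β < 1 and the concentrability coefficient C is finite, then for every f ∈ F with M(f) > 0, the squared prediction error satisfies E(f)² ≤ (1/(1−γ))² · (C/(1−β)) · M(f); in particular the off-policy cost coefficient C* = sup_{f ∈ F} E(f)²/M(f) satisfies C* ≤ (1/(1−γ))² · C/(1−β). -/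
open MeasureTheory ProbabilityTheory
open scoped ENNReal NNReal

/-!
Since `f* = T f*`, the error `Δ = f* − f` satisfies `Δ = (T f − f) + γ P^π Δ`; integrating along the
laws `P_h` of the chain and telescoping gives `(1 − γ) E(f) = E_{d^π}[T f − f]`, so by Jensen and
concentrability `E(f)² ≤ (1 − γ)⁻² ‖f − T f‖_π² ≤ (1 − γ)⁻² C ‖f − T f‖_μ²`. On the other side the
definition of `β` gives `inf_g ‖g − T f‖_μ ≤ β ‖f − T f‖_μ`, hence
`M(f) ≥ (1 − β²) ‖f − T f‖_μ² ≥ (1 − β) ‖f − T f‖_μ²`.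
-/

namespace OffPolicy

section Prelim

theorem hasSum_geometric_mul_sub {γ B : ℝ} (hγ0 : 0 ≤ γ) (hγ1 : γ < 1) {a : ℕ → ℝ}
    (ha : ∀ n, |a n| ≤ B) : HasSum (fun n => γ ^ n * (a n - γ * a (n + 1))) (a 0) := by
  have hsum : Summable fun n => γ ^ n * a n := by
    refine .of_norm_bounded ((summable_geometric_of_lt_one hγ0 hγ1).mul_left B) fun n => ?_
    rw [Real.norm_eq_abs, abs_mul, abs_pow, abs_of_nonneg hγ0, mul_comm]
    exact mul_le_mul_of_nonneg_right (ha n) (pow_nonneg hγ0 n)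
  have hshift := (hasSum_nat_add_iff' 1).2 hsum.hasSum
  have h := hsum.hasSum.sub hshift
  rw [Finset.sum_range_one, pow_zero, one_mul, sub_sub_cancel] at h
  simpa only [mul_sub, pow_succ, mul_assoc] using h

variable {α β : Type*} [MeasurableSpace α] [MeasurableSpace β]

theorem integral_bind {μ : Measure α} {κ : Kernel α β} {f : β → ℝ}
    (hf : Integrable f (μ.bind κ)) : ∫ y, f y ∂(μ.bind κ) = ∫ x, ∫ y, f y ∂κ x ∂μ := by
  have h := Kernel.integral_comp (η := κ) (κ := Kernel.const Unit μ) (a := ()) (f := f)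
  simp only [Kernel.comp_apply, Kernel.const_apply] at h
  exact h hf

theorem integrable_of_abs_le {μ : Measure α} [IsFiniteMeasure μ] {f : α → ℝ} (hf : Measurable f)
    {B : ℝ} (hB : ∀ x, |f x| ≤ B) : Integrable f μ :=
  .of_bound hf.aestronglyMeasurable B (ae_of_all _ fun x => (Real.norm_eq_abs _).trans_le (hB x))

theorem abs_integral_le_of_abs_le {μ : Measure α} [IsProbabilityMeasure μ] {f : α → ℝ} {B : ℝ}
    (hB : ∀ x, |f x| ≤ B) : |∫ x, f x ∂μ| ≤ B := by
  simpa using norm_integral_le_of_norm_le_const (μ := μ) (f := f)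
    (ae_of_all _ fun x => (Real.norm_eq_abs _).trans_le (hB x))

theorem memLp_of_abs_le {μ : Measure α} [IsFiniteMeasure μ] {f : α → ℝ} (hf : Measurable f)
    {B : ℝ} (hB : ∀ x, |f x| ≤ B) (p : ℝ≥0∞) : MemLp f p μ :=
  .of_bound hf.aestronglyMeasurable B (ae_of_all _ fun x => (Real.norm_eq_abs _).trans_le (hB x))

theorem sq_integral_le_integral_sq {μ : Measure α} [IsProbabilityMeasure μ] {f : α → ℝ}
    (hf : MemLp f 2 μ) : (∫ x, f x ∂μ) ^ 2 ≤ ∫ x, f x ^ 2 ∂μ := by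
  have h := variance_nonneg f μ
  rw [variance_eq_sub hf] at h
  simpa using h

theorem sInf_image_le_sq_sInf_image_sqrt {ι : Type*} {s : Set ι} (hs : s.Nonempty) {q : ι → ℝ}
    (hq : ∀ i, 0 ≤ q i) : sInf (q '' s) ≤ sInf ((fun i => √(q i)) '' s) ^ 2 := by
  have hm : 0 ≤ sInf (q '' s) := Real.sInf_nonneg (by rintro _ ⟨i, -, rfl⟩; exact hq i)
  have hsqrt : √(sInf (q '' s)) ≤ sInf ((fun i => √(q i)) '' s) := by
    refine le_csInf (hs.image _) ?_
    rintro _ ⟨i, hi, rfl⟩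
    exact Real.sqrt_le_sqrt (csInf_le ⟨0, by rintro _ ⟨j, -, rfl⟩; exact hq j⟩ ⟨i, hi, rfl⟩)
  calc sInf (q '' s) = √(sInf (q '' s)) ^ 2 := (Real.sq_sqrt hm).symm
    _ ≤ _ := pow_le_pow_left₀ (Real.sqrt_nonneg _) hsqrt 2

end Prelim

section MDP

variable {S A : Type*} [MeasurableSpace S] [MeasurableSpace A]

/-- The operator `P^π`; `bellmanOp γ rew P pol f` unfolds to `rew + γ • transOp P pol f`. -/
noncomputable def transOp (P : Kernel (S × A) S) (pol : Kernel S A) (f : S × A → ℝ)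
    (x : S × A) : ℝ :=
  ∫ s', polExp pol f s' ∂P x

variable {P : Kernel (S × A) S} {pol : Kernel S A} {f g : S × A → ℝ} {B : ℝ}

theorem measurable_polExp [IsSFiniteKernel pol] (hf : Measurable f) :
    Measurable (polExp pol f) :=
  (hf.stronglyMeasurable.integral_kernel_prod_right' (κ := pol)).measurable

theorem abs_polExp_le [IsMarkovKernel pol] (hB : ∀ x, |f x| ≤ B) (s : S) :
    |polExp pol f s| ≤ B :=
  abs_integral_le_of_abs_le fun a => hB (s, a)

theorem polExp_sub [IsMarkovKernel pol] (hf : Measurable f) (hg : Measurable g)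
    (hfB : ∀ x, |f x| ≤ B) (hgB : ∀ x, |g x| ≤ B) (s : S) :
    polExp pol (fun x => f x - g x) s = polExp pol f s - polExp pol g s :=
  integral_sub (integrable_of_abs_le (hf.comp measurable_prodMk_left) fun a => hfB (s, a))
    (integrable_of_abs_le (hg.comp measurable_prodMk_left) fun a => hgB (s, a))

theorem measurable_transOp [IsSFiniteKernel P] [IsSFiniteKernel pol] (hf : Measurable f) :
    Measurable (transOp P pol f) :=
  (((measurable_polExp hf).comp measurable_snd).stronglyMeasurable.integral_kernel_prod_right'
    (κ := P)).measurable

theorem abs_transOp_le [IsMarkovKernel P] [IsMarkovKernel pol] (hB : ∀ x, |f x| ≤ B)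
    (x : S × A) : |transOp P pol f x| ≤ B :=
  abs_integral_le_of_abs_le (abs_polExp_le hB)

theorem transOp_sub [IsMarkovKernel P] [IsMarkovKernel pol] (hf : Measurable f)
    (hg : Measurable g) (hfB : ∀ x, |f x| ≤ B) (hgB : ∀ x, |g x| ≤ B) (x : S × A) :
    transOp P pol (fun y => f y - g y) x = transOp P pol f x - transOp P pol g x := by
  simp only [transOp, polExp_sub hf hg hfB hgB]
  exact integral_sub (integrable_of_abs_le (measurable_polExp hf) (abs_polExp_le hfB))
    (integrable_of_abs_le (measurable_polExp hg) (abs_polExp_le hgB))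

variable {γ : ℝ} {rew : S × A → ℝ}

theorem measurable_bellmanOp [IsSFiniteKernel P] [IsSFiniteKernel pol] (hrew : Measurable rew)
    (hf : Measurable f) : Measurable (bellmanOp γ rew P pol f) :=
  hrew.add ((measurable_transOp hf).const_mul γ)

theorem abs_bellmanOp_le [IsMarkovKernel P] [IsMarkovKernel pol] (hγ : 0 ≤ γ) {R : ℝ}
    (hrew : ∀ x, |rew x| ≤ R) (hB : ∀ x, |f x| ≤ B) (x : S × A) :
    |bellmanOp γ rew P pol f x| ≤ R + γ * B := by
  have hP : |γ * transOp P pol f x| ≤ γ * B := by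
    rw [abs_mul, abs_of_nonneg hγ]
    exact mul_le_mul_of_nonneg_left (abs_transOp_le hB x) hγ
  exact (abs_add_le _ _).trans (add_le_add (hrew x) hP)

theorem bellmanOp_sub_bellmanOp [IsMarkovKernel P] [IsMarkovKernel pol] (hf : Measurable f)
    (hg : Measurable g) (hfB : ∀ x, |f x| ≤ B) (hgB : ∀ x, |g x| ≤ B) (x : S × A) :
    bellmanOp γ rew P pol f x - bellmanOp γ rew P pol g x =
      γ * transOp P pol (fun y => f y - g y) x := by
  rw [transOp_sub hf hg hfB hgB]
  simp only [bellmanOp, transOp]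
  ring

theorem abs_bellmanOp_sub_self_le [IsMarkovKernel P] [IsMarkovKernel pol] (hγ : 0 ≤ γ)
    {R : ℝ} (hrew : ∀ x, |rew x| ≤ R) (hB : ∀ x, |f x| ≤ B) (x : S × A) :
    |bellmanOp γ rew P pol f x - f x| ≤ R + γ * B + B :=
  (abs_sub _ _).trans (add_le_add (abs_bellmanOp_le hγ hrew hB x) (hB x))

theorem stepMeas_eq_comp [IsSFiniteKernel pol] : stepMeas P pol = ⇑((Kernel.id ×ₖ pol) ∘ₖ P) := by
  funext x
  rw [Kernel.comp_apply, stepMeas]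
  congr 1
  funext s'
  rw [Kernel.prod_apply, Kernel.id_apply, Measure.dirac_prod]

instance isProbabilityMeasure_stepLaw [IsMarkovKernel P] [IsMarkovKernel pol] (s0 : S) (h : ℕ) :
    IsProbabilityMeasure (stepLaw P pol s0 h) := by
  induction h with
  | zero => exact Measure.isProbabilityMeasure_map measurable_prodMk_left.aemeasurable
  | succ h ih =>
    rw [stepLaw, stepMeas_eq_comp]
    exact isProbabilityMeasure_bind (Kernel.aemeasurable _) (ae_of_all _ fun _ => inferInstance)

theorem integral_stepLaw_zero (hg : Measurable g) (s0 : S) :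
    ∫ x, g x ∂stepLaw P pol s0 0 = polExp pol g s0 :=
  integral_map measurable_prodMk_left.aemeasurable hg.aestronglyMeasurable

theorem integral_stepMeas [IsMarkovKernel P] [IsMarkovKernel pol] (hg : Measurable g)
    (hB : ∀ x, |g x| ≤ B) (x : S × A) :
    ∫ y, g y ∂stepMeas P pol x = transOp P pol g x := by
  rw [stepMeas_eq_comp, Kernel.comp_apply, integral_bind (integrable_of_abs_le hg hB)]
  refine integral_congr_ae (ae_of_all _ fun s' => ?_)
  dsimp only
  rw [Kernel.prod_apply, Kernel.id_apply, Measure.dirac_prod]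
  exact integral_map measurable_prodMk_left.aemeasurable hg.aestronglyMeasurable

theorem integral_stepLaw_succ [IsMarkovKernel P] [IsMarkovKernel pol] (hg : Measurable g)
    (hB : ∀ x, |g x| ≤ B) (s0 : S) (h : ℕ) :
    ∫ x, g x ∂stepLaw P pol s0 (h + 1) = ∫ x, transOp P pol g x ∂stepLaw P pol s0 h := by
  rw [stepLaw, stepMeas_eq_comp, integral_bind (integrable_of_abs_le hg hB)]
  exact integral_congr_ae (ae_of_all _ fun x => by
    rw [← integral_stepMeas hg hB, stepMeas_eq_comp])

theorem sum_pow_smul_stepLaw_univ [IsMarkovKernel P] [IsMarkovKernel pol] (s0 : S) :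
    Measure.sum (fun h : ℕ => ENNReal.ofReal γ ^ h • stepLaw P pol s0 h) Set.univ =
      (1 - ENNReal.ofReal γ)⁻¹ := by
  simp [Measure.sum_apply _ MeasurableSet.univ, ENNReal.tsum_geometric]

theorem isProbabilityMeasure_occMeas [IsMarkovKernel P] [IsMarkovKernel pol] (hγ0 : 0 ≤ γ)
    (hγ1 : γ < 1) (s0 : S) : IsProbabilityMeasure (occMeas γ P pol s0) := by
  constructor
  rw [occMeas, Measure.smul_apply, sum_pow_smul_stepLaw_univ, smul_eq_mul,
    ← ENNReal.ofReal_one, ← ENNReal.ofReal_sub _ hγ0, ENNReal.ofReal_one]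
  exact ENNReal.mul_inv_cancel (ENNReal.ofReal_pos.2 (sub_pos.2 hγ1)).ne' ENNReal.ofReal_ne_top

theorem integral_occMeas [IsMarkovKernel P] [IsMarkovKernel pol] (hγ0 : 0 ≤ γ) (hγ1 : γ < 1)
    (hg : Measurable g) (hB : ∀ x, |g x| ≤ B) (s0 : S) :
    ∫ x, g x ∂occMeas γ P pol s0 = (1 - γ) * ∑' h, γ ^ h * ∫ x, g x ∂stepLaw P pol s0 h := by
  have : IsFiniteMeasure (Measure.sum fun h : ℕ => ENNReal.ofReal γ ^ h • stepLaw P pol s0 h) :=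
    ⟨by simpa [sum_pow_smul_stepLaw_univ] using hγ1⟩
  simp only [occMeas, integral_smul_measure, integral_sum_measure (integrable_of_abs_le hg hB),
    ENNReal.toReal_pow, ENNReal.toReal_ofReal hγ0, ENNReal.toReal_ofReal (sub_nonneg.2 hγ1.le),
    smul_eq_mul]

variable {fstar : S × A → ℝ}

theorem one_sub_mul_predErr_eq_integral_occMeas [IsMarkovKernel P] [IsMarkovKernel pol]
    (hγ0 : 0 ≤ γ) (hγ1 : γ < 1)
    {R : ℝ} (hrew_meas : Measurable rew) (hrew : ∀ x, |rew x| ≤ R)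
    (hfstar_meas : Measurable fstar) (hfstar : ∀ x, |fstar x| ≤ B)
    (hfix : bellmanOp γ rew P pol fstar = fstar) (hf_meas : Measurable f) (hf : ∀ x, |f x| ≤ B)
    (s0 : S) :
    (1 - γ) * predErr pol fstar f s0 =
      ∫ x, (bellmanOp γ rew P pol f x - f x) ∂occMeas γ P pol s0 := by
  set Δ := fun x => fstar x - f x with hΔ
  set ε := fun x => bellmanOp γ rew P pol f x - f x with hε
  have hΔm : Measurable Δ := hfstar_meas.sub hf_meas
  have hΔB (x) : |Δ x| ≤ B + B := (abs_sub _ _).trans (add_le_add (hfstar x) (hf x))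
  have hεm : Measurable ε := (measurable_bellmanOp hrew_meas hf_meas).sub hf_meas
  have hεB := abs_bellmanOp_sub_self_le (P := P) (pol := pol) hγ0 hrew hf
  have hΔ_eq (x) : Δ x = ε x + γ * transOp P pol Δ x := by
    have h := bellmanOp_sub_bellmanOp (γ := γ) (rew := rew) (P := P) (pol := pol)
      hfstar_meas hf_meas hfstar hf x
    rw [hfix] at h
    simp only [hΔ, hε] at h ⊢
    linarith
  set a := fun h => ∫ x, Δ x ∂stepLaw P pol s0 h
  have ha (h : ℕ) : a h - γ * a (h + 1) = ∫ x, ε x ∂stepLaw P pol s0 h := by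
    have hΔ_int : a h = ∫ x, ε x ∂stepLaw P pol s0 h + γ * a (h + 1) := by
      rw [show a h = ∫ x, (ε x + γ * transOp P pol Δ x) ∂stepLaw P pol s0 h from
          integral_congr_ae (ae_of_all _ hΔ_eq),
        integral_add (integrable_of_abs_le hεm hεB)
          ((integrable_of_abs_le (measurable_transOp hΔm) (abs_transOp_le hΔB)).const_mul γ),
        integral_const_mul, ← integral_stepLaw_succ hΔm hΔB]
    linarith
  have hsum := hasSum_geometric_mul_sub hγ0 hγ1 (a := a) fun h => abs_integral_le_of_abs_le hΔB
  simp only [ha] at hsum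
  rw [integral_occMeas hγ0 hγ1 hεm hεB, hsum.tsum_eq]
  exact congrArg _ (integral_stepLaw_zero hΔm s0).symm

theorem sq_predErr_le [IsMarkovKernel P] [IsMarkovKernel pol] (hγ0 : 0 ≤ γ) (hγ1 : γ < 1)
    {R : ℝ} (hrew_meas : Measurable rew) (hrew : ∀ x, |rew x| ≤ R)
    (hfstar_meas : Measurable fstar) (hfstar : ∀ x, |fstar x| ≤ B)
    (hfix : bellmanOp γ rew P pol fstar = fstar) (hf_meas : Measurable f) (hf : ∀ x, |f x| ≤ B)
    (s0 : S) :
    predErr pol fstar f s0 ^ 2 ≤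
      (1 / (1 - γ)) ^ 2 * l2sq (occMeas γ P pol s0) (fun x => f x - bellmanOp γ rew P pol f x) := by
  have := isProbabilityMeasure_occMeas (P := P) (pol := pol) hγ0 hγ1 s0
  have hγ : 1 - γ ≠ 0 := (sub_pos.2 hγ1).ne'
  have hid := one_sub_mul_predErr_eq_integral_occMeas hγ0 hγ1 hrew_meas hrew hfstar_meas hfstar
    hfix hf_meas hf s0
  have hε : MemLp (fun x => bellmanOp γ rew P pol f x - f x) 2 (occMeas γ P pol s0) :=
    memLp_of_abs_le ((measurable_bellmanOp hrew_meas hf_meas).sub hf_meas)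
      (abs_bellmanOp_sub_self_le hγ0 hrew hf) 2
  calc predErr pol fstar f s0 ^ 2
      = (1 / (1 - γ)) ^ 2 * (∫ x, (bellmanOp γ rew P pol f x - f x) ∂occMeas γ P pol s0) ^ 2 := by
        rw [← hid]; field_simp
    _ ≤ (1 / (1 - γ)) ^ 2 * ∫ x, (bellmanOp γ rew P pol f x - f x) ^ 2 ∂occMeas γ P pol s0 := by
        gcongr; exact sq_integral_le_integral_sq hε
    _ = _ := by
        congr 1
        exact integral_congr_ae (ae_of_all _ fun x => by ring)

end MDP

section Minimax

variable {S A : Type*} [MeasurableSpace S] [MeasurableSpace A] {γ : ℝ} {rew : S × A → ℝ}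
  {P : Kernel (S × A) S} {pol : Kernel S A} {μ : Measure (S × A)} {F : Set (S × A → ℝ)}
  {f : S × A → ℝ}

theorem l2sq_nonneg {X : Type*} [MeasurableSpace X] (ν : Measure X) (h : X → ℝ) :
    0 ≤ l2sq ν h :=
  integral_nonneg fun _ => sq_nonneg _

theorem projDist_nonneg (h : S × A → ℝ) : 0 ≤ projDist μ F h :=
  Real.sInf_nonneg (by rintro _ ⟨g, -, rfl⟩; exact Real.sqrt_nonneg _)

theorem projDist_bellmanOp_le_bellErr (hf : f ∈ F) :
    projDist μ F (bellmanOp γ rew P pol f) ≤ bellErr γ rew P pol μ f :=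
  csInf_le ⟨0, by rintro _ ⟨g, -, rfl⟩; exact Real.sqrt_nonneg _⟩ ⟨f, hf, rfl⟩

theorem betaFac_nonneg : 0 ≤ betaFac γ rew P pol μ F :=
  Real.sSup_nonneg (by
    rintro _ ⟨g, -, rfl⟩
    exact div_nonneg (projDist_nonneg _) (Real.sqrt_nonneg _))

theorem projDist_bellmanOp_le_betaFac_mul (hf : f ∈ F) :
    projDist μ F (bellmanOp γ rew P pol f) ≤ betaFac γ rew P pol μ F * bellErr γ rew P pol μ f := by
  have hnonneg : 0 ≤ bellErr γ rew P pol μ f := Real.sqrt_nonneg _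
  rcases hnonneg.eq_or_lt with h0 | hpos
  · rw [← h0, mul_zero, h0]
    exact projDist_bellmanOp_le_bellErr hf
  · have hbdd : BddAbove ((fun g => projDist μ F (bellmanOp γ rew P pol g) /
        bellErr γ rew P pol μ g) '' {g ∈ F | 0 < bellErr γ rew P pol μ g}) := by
      refine ⟨1, ?_⟩
      rintro _ ⟨g, ⟨hg, hgpos⟩, rfl⟩
      exact div_le_one_of_le₀ (projDist_bellmanOp_le_bellErr hg) hgpos.le
    exact (div_le_iff₀ hpos).1 (le_csSup hbdd ⟨f, ⟨hf, hpos⟩, rfl⟩)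

theorem one_sub_sq_betaFac_mul_le_minimaxLoss (hf : f ∈ F) :
    (1 - betaFac γ rew P pol μ F ^ 2) * l2sq μ (fun x => f x - bellmanOp γ rew P pol f x) ≤
      minimaxLoss γ rew P pol μ F f := by
  have hinf : sInf ((fun g => l2sq μ (fun x => g x - bellmanOp γ rew P pol f x)) '' F) ≤
      projDist μ F (bellmanOp γ rew P pol f) ^ 2 :=
    sInf_image_le_sq_sInf_image_sqrt ⟨f, hf⟩ fun g => l2sq_nonneg μ _
  have hproj : projDist μ F (bellmanOp γ rew P pol f) ^ 2 ≤
      betaFac γ rew P pol μ F ^ 2 * l2sq μ (fun x => f x - bellmanOp γ rew P pol f x) := by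
    rw [← Real.sq_sqrt (l2sq_nonneg μ _), ← mul_pow]
    exact pow_le_pow_left₀ (projDist_nonneg _) (projDist_bellmanOp_le_betaFac_mul hf) 2
  rw [minimaxLoss]
  linarith

theorem minimaxLoss_le_l2sq :
    minimaxLoss γ rew P pol μ F f ≤ l2sq μ (fun x => f x - bellmanOp γ rew P pol f x) :=
  sub_le_self _ (Real.sInf_nonneg (by rintro _ ⟨g, -, rfl⟩; exact l2sq_nonneg _ _))

theorem concCoef_nonneg (dpi : Measure (S × A)) : 0 ≤ concCoef γ rew P pol μ dpi F :=
  Real.sSup_nonneg (by rintro _ ⟨g, -, rfl⟩; exact div_nonneg (l2sq_nonneg _ _) (l2sq_nonneg _ _))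

theorem l2sq_le_concCoef_mul {dpi : Measure (S × A)}
    (hC : BddAbove ((fun g => l2sq dpi (fun x => g x - bellmanOp γ rew P pol g x) /
      l2sq μ (fun x => g x - bellmanOp γ rew P pol g x)) '' F))
    (hf : f ∈ F) (hpos : 0 < l2sq μ (fun x => f x - bellmanOp γ rew P pol f x)) :
    l2sq dpi (fun x => f x - bellmanOp γ rew P pol f x) ≤
      concCoef γ rew P pol μ dpi F * l2sq μ (fun x => f x - bellmanOp γ rew P pol f x) :=
  (div_le_iff₀ hpos).1 (le_csSup hC ⟨f, hf, rfl⟩)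

end Minimax

theorem sq_predErr_le_mul_minimaxLoss {S A : Type*} [MeasurableSpace S] [MeasurableSpace A]
    {γ : ℝ} (hγ0 : 0 ≤ γ) (hγ1 : γ < 1) {rew : S × A → ℝ} (hrew_meas : Measurable rew)
    {R : ℝ} (hrew : ∀ x, |rew x| ≤ R) {P : Kernel (S × A) S} [IsMarkovKernel P]
    {pol : Kernel S A} [IsMarkovKernel pol] {μ : Measure (S × A)} {F : Set (S × A → ℝ)}
    {B : ℝ} {fstar : S × A → ℝ} (hfstar_meas : Measurable fstar) (hfstar : ∀ x, |fstar x| ≤ B)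
    (hfix : bellmanOp γ rew P pol fstar = fstar) (s0 : S) (hβ : betaFac γ rew P pol μ F < 1)
    (hC : BddAbove ((fun g => l2sq (occMeas γ P pol s0)
        (fun x => g x - bellmanOp γ rew P pol g x) /
        l2sq μ (fun x => g x - bellmanOp γ rew P pol g x)) '' F))
    {f : S × A → ℝ} (hfF : f ∈ F) (hf_meas : Measurable f) (hf : ∀ x, |f x| ≤ B)
    (hM : 0 < minimaxLoss γ rew P pol μ F f) :
    predErr pol fstar f s0 ^ 2 ≤
      (1 / (1 - γ)) ^ 2 * (concCoef γ rew P pol μ (occMeas γ P pol s0) F /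
        (1 - betaFac γ rew P pol μ F)) * minimaxLoss γ rew P pol μ F f := by
  set β := betaFac γ rew P pol μ F
  set Qμ := l2sq μ (fun x => f x - bellmanOp γ rew P pol f x)
  have hQμ : 0 < Qμ := hM.trans_le minimaxLoss_le_l2sq
  have hβ0 : 0 ≤ β := betaFac_nonneg
  have hβsq : (1 - β) * Qμ ≤ (1 - β ^ 2) * Qμ :=
    mul_le_mul_of_nonneg_right (by nlinarith) hQμ.le
  have hloss : (1 - β) * Qμ ≤ minimaxLoss γ rew P pol μ F f :=
    hβsq.trans (one_sub_sq_betaFac_mul_le_minimaxLoss hfF)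
  calc predErr pol fstar f s0 ^ 2
      ≤ (1 / (1 - γ)) ^ 2 * l2sq (occMeas γ P pol s0) (fun x => f x - bellmanOp γ rew P pol f x) :=
        sq_predErr_le hγ0 hγ1 hrew_meas hrew hfstar_meas hfstar hfix hf_meas hf s0
    _ ≤ (1 / (1 - γ)) ^ 2 * (concCoef γ rew P pol μ (occMeas γ P pol s0) F * Qμ) := by
        gcongr; exact l2sq_le_concCoef_mul hC hfF hQμ
    _ ≤ (1 / (1 - γ)) ^ 2 * (concCoef γ rew P pol μ (occMeas γ P pol s0) F *
          (minimaxLoss γ rew P pol μ F f / (1 - β))) := by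
        have hC0 := concCoef_nonneg (γ := γ) (rew := rew) (P := P) (pol := pol) (μ := μ) (F := F)
          (occMeas γ P pol s0)
        gcongr
        rw [le_div_iff₀ (sub_pos.2 hβ)]
        linarith
    _ = _ := by ring

end OffPolicy

open OffPolicy

theorem off_policy_cost_coefficient_bound_general
    {S A : Type*} [MeasurableSpace S] [MeasurableSpace A]
    (γ : ℝ) (hγ0 : 0 ≤ γ) (hγ1 : γ < 1)
    (rew : S × A → ℝ) (hrew_meas : Measurable rew)
    (hrew_bdd : ∀ x, rew x ∈ Set.Icc (0 : ℝ) 1)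
    (P : Kernel (S × A) S) [IsMarkovKernel P]
    (pol : Kernel S A) [IsMarkovKernel pol]
    (μ : Measure (S × A))
    (F : Set ((S × A) → ℝ))
    (hF_meas : ∀ f ∈ F, Measurable f)
    (hF_bdd : ∀ f ∈ F, ∀ x, |f x| ≤ 1)
    -- `f*` is the action-value function of the policy
    (fstar : (S × A) → ℝ) (hfstar_meas : Measurable fstar)
    (hfstar_bdd : ∀ x, |fstar x| ≤ 1)
    (hfix : bellmanOp γ rew P pol fstar = fstar)
    -- the initial state
    (s0 : S)
    -- `β < 1`
    (hβ : betaFac γ rew P pol μ F < 1)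
    -- the concentrability coefficient is finite
    (hC : BddAbove ((fun f => l2sq (occMeas γ P pol s0)
        (fun x => f x - bellmanOp γ rew P pol f x) /
        l2sq μ (fun x => f x - bellmanOp γ rew P pol f x)) '' F)) :
    (∀ f ∈ F, 0 < minimaxLoss γ rew P pol μ F f →
      (predErr pol fstar f s0) ^ 2 ≤
        (1 / (1 - γ)) ^ 2 *
          (concCoef γ rew P pol μ (occMeas γ P pol s0) F /
            (1 - betaFac γ rew P pol μ F)) *
          minimaxLoss γ rew P pol μ F f) ∧
    sSup ((fun f => (predErr pol fstar f s0) ^ 2 / minimaxLoss γ rew P pol μ F f) '' F) ≤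
      (1 / (1 - γ)) ^ 2 *
        (concCoef γ rew P pol μ (occMeas γ P pol s0) F /
          (1 - betaFac γ rew P pol μ F)) := by
  have hrew (x : S × A) : |rew x| ≤ 1 := abs_le.2 ⟨by linarith [(hrew_bdd x).1], (hrew_bdd x).2⟩
  have hbound : ∀ f ∈ F, 0 < minimaxLoss γ rew P pol μ F f → _ := fun f hf hM =>
    sq_predErr_le_mul_minimaxLoss hγ0 hγ1 hrew_meas hrew hfstar_meas hfstar_bdd hfix s0 hβ hC hf
      (hF_meas f hf) (hF_bdd f hf) hM
  have hK : 0 ≤ (1 / (1 - γ)) ^ 2 * (concCoef γ rew P pol μ (occMeas γ P pol s0) F /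
      (1 - betaFac γ rew P pol μ F)) :=
    mul_nonneg (sq_nonneg _) (div_nonneg (concCoef_nonneg _) (sub_nonneg.2 hβ.le))
  refine ⟨hbound, Real.sSup_le ?_ hK⟩
  rintro _ ⟨f, hf, rfl⟩
  by_cases hM : 0 < minimaxLoss γ rew P pol μ F f
  · exact (div_le_iff₀ hM).2 (hbound f hf hM)
  · exact (div_nonpos_of_nonneg_of_nonpos (sq_nonneg _) (not_lt.1 hM)).trans hK

/-- Bound on the off-policy cost coefficient: if `β < 1` and the
concentrability coefficient `C` is finite, then for every `f ∈ F` with `M(f) > 0`,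
`E(f)² ≤ (1/(1−γ))²·(C/(1−β))·M(f)`; in particular
`C* = sup_{f ∈ F} E(f)²/M(f) ≤ (1/(1−γ))²·C/(1−β)`. -/
theorem off_policy_cost_coefficient_bound
    {S A : Type*} [MeasurableSpace S] [MeasurableSpace A]
    (γ : ℝ) (hγ0 : 0 ≤ γ) (hγ1 : γ < 1)
    (rew : S × A → ℝ) (hrew_meas : Measurable rew)
    (hrew_bdd : ∀ x, rew x ∈ Set.Icc (0 : ℝ) 1)
    (P : Kernel (S × A) S) [IsMarkovKernel P]
    (pol : Kernel S A) [IsMarkovKernel pol]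
    (μ : Measure (S × A)) [IsProbabilityMeasure μ]
    (F : Set ((S × A) → ℝ))
    (hF_meas : ∀ f ∈ F, Measurable f)
    (hF_bdd : ∀ f ∈ F, ∀ x, |f x| ≤ 1)
    -- `f*` is the action-value function of the policy
    (fstar : (S × A) → ℝ) (hfstar_meas : Measurable fstar)
    (hfstar_bdd : ∀ x, |fstar x| ≤ 1)
    (hfix : bellmanOp γ rew P pol fstar = fstar)
    -- the initial state
    (s0 : S)
    -- `β < 1`
    (hβ : betaFac γ rew P pol μ F < 1)
    -- the concentrability coefficient is finite
    (hC : BddAbove ((fun f => l2sq (occMeas γ P pol s0)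
        (fun x => f x - bellmanOp γ rew P pol f x) /
        l2sq μ (fun x => f x - bellmanOp γ rew P pol f x)) '' F)) :
    (∀ f ∈ F, 0 < minimaxLoss γ rew P pol μ F f →
      (predErr pol fstar f s0) ^ 2 ≤
        (1 / (1 - γ)) ^ 2 *
          (concCoef γ rew P pol μ (occMeas γ P pol s0) F /
            (1 - betaFac γ rew P pol μ F)) *
          minimaxLoss γ rew P pol μ F f) ∧
    sSup ((fun f => (predErr pol fstar f s0) ^ 2 / minimaxLoss γ rew P pol μ F f) '' F) ≤
      (1 / (1 - γ)) ^ 2 *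
        (concCoef γ rew P pol μ (occMeas γ P pol s0) F /
          (1 - betaFac γ rew P pol μ F)) :=
  off_policy_cost_coefficient_bound_general γ hγ0 hγ1 rew hrew_meas hrew_bdd P pol μ F hF_meas
    hF_bdd fstar hfstar_meas hfstar_bdd hfix s0 hβ hC
end

section
/- Expectation of the modified minimax cost: for all bounded measurable f, g : S×A → ℝ, E[ C(f,f) − C(g,f) ] = ‖f − Tf‖_μ² − ‖g − Tf‖_μ²; in particular the conditional variance of the stochastic backup cancels exactly. -/
open MeasureTheory ProbabilityTheory
open scoped ENNReal NNReal

/-!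
The one-sample cost `C(h,f)` is `(h(s,a) − Y)²` with the stochastic backup
`Y = R + γ f(s',π)`, whose conditional mean given `(s,a)` is `Tf(s,a)`. The difference
`(a − Y)² − (b − Y)²` is affine in `Y`, so its conditional expectation is
`(a − E Y)² − (b − E Y)²` and the conditional variance of `Y` cancels; integrating over
`(s,a) ∼ μ` gives the claim.
-/

namespace MeasureTheory

theorem abs_integral_le_of_abs_le {X : Type*} [MeasurableSpace X] {ν : Measure X}
    [IsProbabilityMeasure ν] {h : X → ℝ} {B : ℝ} (hB : ∀ x, |h x| ≤ B) :
    |∫ x, h x ∂ν| ≤ B := by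
  have hB' : ∀ᵐ x ∂ν, ‖h x‖ ≤ B := ae_of_all _ hB
  simpa using norm_integral_le_of_norm_le_const hB'

theorem integrable_sq_of_abs_le {X : Type*} [MeasurableSpace X] {ν : Measure X}
    [IsFiniteMeasure ν] {h : X → ℝ} (hh : AEStronglyMeasurable h ν) {C : ℝ}
    (hC : ∀ᵐ x ∂ν, |h x| ≤ C) : Integrable (fun x => h x ^ 2) ν :=
  (MemLp.of_bound hh C (hC.mono fun x hx => (hx : ‖h x‖ ≤ C))).integrable_sq

theorem integral_sq_sub_sub_sq_sub {X : Type*} [MeasurableSpace X] {ν : Measure X}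
    [IsProbabilityMeasure ν] {Y : X → ℝ} (hY : Integrable Y ν) (a b : ℝ) :
    ∫ x, ((a - Y x) ^ 2 - (b - Y x) ^ 2) ∂ν =
      (a - ∫ x, Y x ∂ν) ^ 2 - (b - ∫ x, Y x ∂ν) ^ 2 := by
  have haffine : ∀ x, (a - Y x) ^ 2 - (b - Y x) ^ 2 = (a ^ 2 - b ^ 2) - 2 * (a - b) * Y x :=
    fun x => by ring
  simp_rw [haffine]
  rw [integral_sub (integrable_const _) (hY.const_mul _), integral_const, integral_const_mul]
  simp only [probReal_univ, one_smul]
  ring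

theorem Measure.bind_map_prodMk_eq_compProd {α β : Type*} [MeasurableSpace α]
    [MeasurableSpace β] (μ : Measure α) [SFinite μ] (κ : Kernel α β) [IsSFiniteKernel κ] :
    μ.bind (fun a => (κ a).map (Prod.mk a)) = μ ⊗ₘ κ := by
  rw [Measure.compProd_eq_comp_prod]
  congr 1
  funext a
  rw [Kernel.prod_apply, Kernel.id_apply, Measure.dirac_prod]

end MeasureTheory

section MDP

variable {S A : Type*} [MeasurableSpace S] [MeasurableSpace A]

theorem measurable_polExp (pol : Kernel S A) [IsSFiniteKernel pol] {f : S × A → ℝ}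
    (hf : Measurable f) : Measurable (polExp pol f) :=
  hf.stronglyMeasurable.integral_kernel_prod_right'.measurable

theorem abs_polExp_le (pol : Kernel S A) [IsMarkovKernel pol] {f : S × A → ℝ} {B : ℝ}
    (hB : ∀ x, |f x| ≤ B) (s : S) : |polExp pol f s| ≤ B :=
  abs_integral_le_of_abs_le fun a => hB (s, a)

theorem integrable_polExp (pol : Kernel S A) [IsMarkovKernel pol] {f : S × A → ℝ}
    (hf : Measurable f) {B : ℝ} (hB : ∀ x, |f x| ≤ B) (ν : Measure S) [IsFiniteMeasure ν] :
    Integrable (polExp pol f) ν :=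
  .of_bound (measurable_polExp pol hf).aestronglyMeasurable B
    (ae_of_all _ fun s => (abs_polExp_le pol hB s : ‖polExp pol f s‖ ≤ B))

theorem measurable_bellmanOp (γ : ℝ) {rew : S × A → ℝ} (hrew : Measurable rew)
    (P : Kernel (S × A) S) [IsSFiniteKernel P] (pol : Kernel S A) [IsSFiniteKernel pol]
    {f : S × A → ℝ} (hf : Measurable f) : Measurable (bellmanOp γ rew P pol f) :=
  hrew.add (measurable_const.mul
    ((measurable_polExp pol hf).stronglyMeasurable.integral_kernel (κ := P)).measurable)

theorem abs_bellmanOp_le (γ : ℝ) {rew : S × A → ℝ} {Br : ℝ} (hrew : ∀ x, |rew x| ≤ Br)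
    (P : Kernel (S × A) S) [IsMarkovKernel P] (pol : Kernel S A) [IsMarkovKernel pol]
    {f : S × A → ℝ} {B : ℝ} (hf : ∀ x, |f x| ≤ B) (sa : S × A) :
    |bellmanOp γ rew P pol f sa| ≤ Br + |γ| * B := by
  have hW : |∫ s', polExp pol f s' ∂P sa| ≤ B :=
    abs_integral_le_of_abs_le (abs_polExp_le pol hf)
  calc |bellmanOp γ rew P pol f sa|
      ≤ |rew sa| + |γ| * |∫ s', polExp pol f s' ∂P sa| := by
        rw [← abs_mul]; exact abs_add_le _ _
    _ ≤ Br + |γ| * B := by gcongr; exact hrew sa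

theorem integrable_sq_sub_bellmanOp (γ : ℝ) {rew : S × A → ℝ} (hrew : Measurable rew)
    {Br : ℝ} (hBr : ∀ x, |rew x| ≤ Br) (P : Kernel (S × A) S) [IsMarkovKernel P]
    (pol : Kernel S A) [IsMarkovKernel pol] {f : S × A → ℝ} (hf : Measurable f) {B : ℝ}
    (hB : ∀ x, |f x| ≤ B) {h : S × A → ℝ} (hh : Measurable h) {Bh : ℝ} (hBh : ∀ x, |h x| ≤ Bh)
    (μ : Measure (S × A)) [IsFiniteMeasure μ] :
    Integrable (fun x => (h x - bellmanOp γ rew P pol f x) ^ 2) μ :=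
  integrable_sq_of_abs_le (hh.sub (measurable_bellmanOp γ hrew P pol hf)).aestronglyMeasurable
    (ae_of_all _ fun x =>
      (abs_sub _ _).trans (add_le_add (hBh x) (abs_bellmanOp_le γ hBr P pol hB x)))

theorem integral_backup_eq_bellmanOp (γ : ℝ) (rew : S × A → ℝ) (P : Kernel (S × A) S)
    [IsMarkovKernel P] (pol : Kernel S A) [IsMarkovKernel pol] {f : S × A → ℝ}
    (hf : Measurable f) {B : ℝ} (hB : ∀ x, |f x| ≤ B) (sa : S × A) {ρ : Measure ℝ}
    [IsProbabilityMeasure ρ] (hρ : Integrable (fun u => u) ρ) (hmean : ∫ u, u ∂ρ = rew sa) :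
    ∫ b, (b.1 + γ * polExp pol f b.2) ∂(ρ.prod (P sa)) = bellmanOp γ rew P pol f sa := by
  rw [integral_add (hρ.comp_fst _) (((integrable_polExp pol hf hB _).comp_snd ρ).const_mul γ),
    integral_fun_fst (f := fun u => u), integral_const_mul, integral_fun_snd (f := polExp pol f)]
  simp only [probReal_univ, one_smul, hmean]
  rfl

theorem integral_tdCost_sub_tdCost_prod (γ : ℝ) (rew : S × A → ℝ) (P : Kernel (S × A) S)
    [IsMarkovKernel P] (pol : Kernel S A) [IsMarkovKernel pol] {f : S × A → ℝ}
    (hf : Measurable f) {B : ℝ} (hB : ∀ x, |f x| ≤ B) (g : S × A → ℝ) (sa : S × A)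
    {ρ : Measure ℝ} [IsProbabilityMeasure ρ] (hρ : Integrable (fun u => u) ρ)
    (hmean : ∫ u, u ∂ρ = rew sa) :
    ∫ b, (tdCost γ pol f f (sa, b) - tdCost γ pol g f (sa, b)) ∂(ρ.prod (P sa)) =
      (f sa - bellmanOp γ rew P pol f sa) ^ 2 - (g sa - bellmanOp γ rew P pol f sa) ^ 2 := by
  have hcost : ∀ h b, tdCost γ pol h f (sa, b) = (h sa - (b.1 + γ * polExp pol f b.2)) ^ 2 :=
    fun _ _ => by rw [tdCost, sub_sub]
  have hY : Integrable (fun b : ℝ × S => b.1 + γ * polExp pol f b.2) (ρ.prod (P sa)) :=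
    (hρ.comp_fst _).add (((integrable_polExp pol hf hB _).comp_snd ρ).const_mul γ)
  simp_rw [hcost]
  rw [integral_sq_sub_sub_sq_sub hY, integral_backup_eq_bellmanOp γ rew P pol hf hB sa hρ hmean]

theorem tupleLaw_eq_compProd (μ : Measure (S × A)) [SFinite μ] (RL : Kernel (S × A) ℝ)
    [IsSFiniteKernel RL] (P : Kernel (S × A) S) [IsSFiniteKernel P] :
    tupleLaw μ RL P = μ ⊗ₘ (RL ×ₖ P) := by
  rw [tupleLaw, ← Measure.bind_map_prodMk_eq_compProd]
  simp_rw [Kernel.prod_apply]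

theorem ae_reward_mem_Icc_tupleLaw (μ : Measure (S × A)) [SFinite μ] (RL : Kernel (S × A) ℝ)
    [IsSFiniteKernel RL] (hRL : ∀ x, ∀ᵐ u ∂(RL x), u ∈ Set.Icc (0 : ℝ) 1)
    (P : Kernel (S × A) S) [IsSFiniteKernel P] :
    ∀ᵐ t ∂(tupleLaw μ RL P), t.2.1 ∈ Set.Icc (0 : ℝ) 1 := by
  rw [tupleLaw_eq_compProd]
  refine Measure.ae_compProd_of_ae_ae (measurableSet_Icc.preimage (by fun_prop))
    (ae_of_all _ fun sa => ?_)
  rw [Kernel.prod_apply]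
  exact Measure.quasiMeasurePreserving_fst.ae (hRL sa)

theorem integrable_tdCost_tupleLaw (γ : ℝ) (pol : Kernel S A) [IsMarkovKernel pol]
    (μ : Measure (S × A)) [IsFiniteMeasure μ] (RL : Kernel (S × A) ℝ) [IsFiniteKernel RL]
    (hRL : ∀ x, ∀ᵐ u ∂(RL x), u ∈ Set.Icc (0 : ℝ) 1) (P : Kernel (S × A) S) [IsFiniteKernel P]
    {f : S × A → ℝ} (hf : Measurable f) {Bf : ℝ} (hBf : ∀ x, |f x| ≤ Bf)
    {h : S × A → ℝ} (hh : Measurable h) {Bh : ℝ} (hBh : ∀ x, |h x| ≤ Bh) :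
    Integrable (tdCost γ pol h f) (tupleLaw μ RL P) := by
  have hV := measurable_polExp pol hf
  have hR_ae := ae_reward_mem_Icc_tupleLaw μ RL hRL P
  rw [tupleLaw_eq_compProd] at hR_ae ⊢
  refine integrable_sq_of_abs_le (C := Bh + 1 + |γ| * Bf) (by fun_prop) ?_
  filter_upwards [hR_ae] with t ⟨hR0, hR1⟩
  have hR : |t.2.1| ≤ 1 := abs_le.2 ⟨by linarith, hR1⟩
  calc |h t.1 - t.2.1 - γ * polExp pol f t.2.2|
      ≤ |h t.1| + |t.2.1| + |γ| * |polExp pol f t.2.2| := by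
        rw [← abs_mul]; exact (abs_sub _ _).trans (add_le_add_left (abs_sub _ _) _)
    _ ≤ Bh + 1 + |γ| * Bf := by gcongr; exacts [hBh _, abs_polExp_le pol hBf _]

end MDP

theorem expectation_of_modified_minimax_cost_general
    {S A : Type*} [MeasurableSpace S] [MeasurableSpace A]
    (γ : ℝ)
    (rew : S × A → ℝ) (hrew_meas : Measurable rew)
    (hrew_bdd : ∀ x, rew x ∈ Set.Icc (0 : ℝ) 1)
    (P : Kernel (S × A) S) [IsMarkovKernel P]
    (pol : Kernel S A) [IsMarkovKernel pol]
    (μ : Measure (S × A)) [IsProbabilityMeasure μ]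
    -- the reward kernel: conditional law of `R` given `(s,a)`, supported on `[0,1]`
    -- with conditional mean `rew`
    (RL : Kernel (S × A) ℝ) [IsMarkovKernel RL]
    (hRL_supp : ∀ x, (RL x) (Set.Icc (0 : ℝ) 1)ᶜ = 0)
    (hRL_mean : ∀ x, (∫ u, u ∂(RL x)) = rew x)
    -- arbitrary bounded measurable functions
    (f : (S × A) → ℝ) (hf_meas : Measurable f) (hf_bdd : ∃ B : ℝ, ∀ x, |f x| ≤ B)
    (g : (S × A) → ℝ) (hg_meas : Measurable g) (hg_bdd : ∃ B : ℝ, ∀ x, |g x| ≤ B) :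
    ∫ t, (tdCost γ pol f f t - tdCost γ pol g f t) ∂(tupleLaw μ RL P) =
      l2sq μ (fun x => f x - bellmanOp γ rew P pol f x) -
        l2sq μ (fun x => g x - bellmanOp γ rew P pol f x) := by
  obtain ⟨Bf, hBf⟩ := hf_bdd
  obtain ⟨Bg, hBg⟩ := hg_bdd
  have hR : ∀ x, ∀ᵐ u ∂(RL x), u ∈ Set.Icc (0 : ℝ) 1 := fun x => mem_ae_iff.2 (hRL_supp x)
  have hrew_abs : ∀ x, |rew x| ≤ 1 := fun x =>
    abs_le.2 ⟨by linarith [(hrew_bdd x).1], (hrew_bdd x).2⟩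
  have hcost_int := (integrable_tdCost_tupleLaw γ pol μ RL hR P hf_meas hBf hf_meas hBf).sub
    (integrable_tdCost_tupleLaw γ pol μ RL hR P hf_meas hBf hg_meas hBg)
  rw [tupleLaw_eq_compProd] at hcost_int ⊢
  rw [Measure.integral_compProd (f := fun t => tdCost γ pol f f t - tdCost γ pol g f t)
    hcost_int, l2sq, l2sq, ← integral_sub
      (integrable_sq_sub_bellmanOp γ hrew_meas hrew_abs P pol hf_meas hBf hf_meas hBf μ)
      (integrable_sq_sub_bellmanOp γ hrew_meas hrew_abs P pol hf_meas hBf hg_meas hBg μ)]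
  refine integral_congr_ae (ae_of_all _ fun sa => ?_)
  dsimp only
  rw [Kernel.prod_apply]
  exact integral_tdCost_sub_tdCost_prod γ rew P pol hf_meas hBf g sa
    (Integrable.of_mem_Icc 0 1 aemeasurable_id (hR sa)) (hRL_mean sa)

/-- Expectation of the modified minimax cost: for all bounded
measurable `f, g`, `E[C(f,f) − C(g,f)] = ‖f − Tf‖_μ² − ‖g − Tf‖_μ²`; in particular
the conditional variance of the stochastic backup cancels exactly. -/
theorem expectation_of_modified_minimax_cost
    {S A : Type*} [MeasurableSpace S] [MeasurableSpace A]
    (γ : ℝ) (hγ0 : 0 ≤ γ) (hγ1 : γ < 1)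
    (rew : S × A → ℝ) (hrew_meas : Measurable rew)
    (hrew_bdd : ∀ x, rew x ∈ Set.Icc (0 : ℝ) 1)
    (P : Kernel (S × A) S) [IsMarkovKernel P]
    (pol : Kernel S A) [IsMarkovKernel pol]
    (μ : Measure (S × A)) [IsProbabilityMeasure μ]
    -- the reward kernel: conditional law of `R` given `(s,a)`, supported on `[0,1]`
    -- with conditional mean `rew`
    (RL : Kernel (S × A) ℝ) [IsMarkovKernel RL]
    (hRL_supp : ∀ x, (RL x) (Set.Icc (0 : ℝ) 1)ᶜ = 0)
    (hRL_mean : ∀ x, (∫ u, u ∂(RL x)) = rew x)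
    -- arbitrary bounded measurable functions
    (f : (S × A) → ℝ) (hf_meas : Measurable f) (hf_bdd : ∃ B : ℝ, ∀ x, |f x| ≤ B)
    (g : (S × A) → ℝ) (hg_meas : Measurable g) (hg_bdd : ∃ B : ℝ, ∀ x, |g x| ≤ B) :
    ∫ t, (tdCost γ pol f f t - tdCost γ pol g f t) ∂(tupleLaw μ RL P) =
      l2sq μ (fun x => f x - bellmanOp γ rew P pol f x) -
        l2sq μ (fun x => g x - bellmanOp γ rew P pol f x) :=
  expectation_of_modified_minimax_cost_general γ rew hrew_meas hrew_bdd P pol μ RL hRL_supp hRL_mean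
    f hf_meas hf_bdd g hg_meas hg_bdd
end
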